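/- For an edge (r,s) of a connected weighted graph, the locality factor η(r,s) = b_rs ν_rs^T B^† ν_rs equals 1 if and only if (r,s) is a bridge (i.e., its removal disconnects the graph). -/

import Mathlib

open Matrix BigOperators

/-- The weighted Laplacian of a weight function `w` on `Fin N`. -/
def lapMat {N : ℕ} (w : Fin N → Fin N → ℝ) : Matrix (Fin N) (Fin N) ℝ :=
  fun i j => if i = j then ∑ k, w i k else - w i j

/-- Symmetric, nonnegative weights with zero diagonal. -/
def IsWeight {N : ℕ} (w : Fin N → Fin N → ℝ) : Prop :=
  (∀ i j, w i j = w j i) ∧ (∀ i j, 0 ≤ w i j) ∧ (∀ i, w i i = 0)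

/-- The simple graph whose edges are the pairs with nonzero weight. -/
def wGraph {N : ℕ} (w : Fin N → Fin N → ℝ) : SimpleGraph (Fin N) where
  Adj i j := i ≠ j ∧ (w i j ≠ 0 ∨ w j i ≠ 0)
  symm := ⟨fun i j ⟨h1, h2⟩ => ⟨h1.symm, h2.symm⟩⟩
  loopless := ⟨fun i h => h.1 rfl⟩

/-- The dipole vector `ν_rs`: `+1` at `r`, `-1` at `s`, `0` elsewhere. -/
def dipole {N : ℕ} (r s : Fin N) : Fin N → ℝ :=
  fun i => (if i = r then (1:ℝ) else 0) - (if i = s then (1:ℝ) else 0)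

/-- `Bd` is the Moore-Penrose pseudoinverse of `B` (the four Penrose axioms). -/
def IsMoorePenrose {N : ℕ} (B Bd : Matrix (Fin N) (Fin N) ℝ) : Prop :=
  B * Bd * B = B ∧ Bd * B * Bd = Bd ∧ (B * Bd)ᵀ = B * Bd ∧ (Bd * B)ᵀ = Bd * B

/-- The locality factor `η(r,s) = b_rs ν_rs^T B^† ν_rs`. -/
def eta {N : ℕ} (w : Fin N → Fin N → ℝ) (Bdag : Matrix (Fin N) (Fin N) ℝ)
    (r s : Fin N) : ℝ :=
  w r s * (dipole r s ⬝ᵥ Bdag.mulVec (dipole r s))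

/-!
Write `L` for the Laplacian, `ν = ν_rs`, and `L'` for the Laplacian of the weights with the
edge `rs` deleted, so that `L x = L' x + b_rs (x_r - x_s) ν`. Whenever `L y = ν`, the identity
`L B^† L = L` gives `ν^T B^† ν = ν^T y = y_r - y_s`.

If `rs` is a bridge, the indicator `χ` of the component of `r` in `G - rs` has `L' χ = 0`, hence
`L χ = b_rs ν`, and `η = b_rs (χ_r - χ_s) / b_rs = 1`.

Otherwise, connectivity makes `ker L` the constants, so `ν ⊥ ker L` gives `L x = ν` for
`x = B^† ν`. Then `x_r - x_s = x^T L x = x^T L' x + η (x_r - x_s)`, so `η = 1` forces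
`x^T L' x = 0`: `x` is constant on the components of `G - rs`, one of which contains both `r`
and `s`, so `η = b_rs (x_r - x_s) = 0`.
-/

namespace SimpleGraph

theorem Reachable.eq_of_forall_adj {V α : Type*} {G : SimpleGraph V} {f : V → α}
    (hf : ∀ i j, G.Adj i j → f i = f j) {i j : V} (h : G.Reachable i j) : f i = f j := by
  obtain ⟨p⟩ := h
  induction p with
  | nil => rfl
  | cons hadj _ ih => exact (hf _ _ hadj).trans ih

end SimpleGraph

theorem dotProduct_mulVec_eq_of_mulVec_eq {n R : Type*} [Fintype n] [CommSemiring R]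
    {L Ld : Matrix n n R} (hL : Lᵀ = L) (hLd : L * Ld * L = L) {y v : n → R}
    (hy : L *ᵥ y = v) : v ⬝ᵥ Ld *ᵥ v = v ⬝ᵥ y := by
  subst hy
  rw [mulVec_mulVec, dotProduct_mulVec, vecMul_mulVec, hL, ← Matrix.mul_assoc, hLd,
    ← dotProduct_mulVec, dotProduct_comm]

section Dipole

variable {N : ℕ} (r s : Fin N)

theorem dipole_dotProduct (y : Fin N → ℝ) : dipole r s ⬝ᵥ y = y r - y s := by
  simp [dipole, dotProduct, sub_mul, Finset.sum_sub_distrib, ite_mul]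

theorem sum_dipole : ∑ i, dipole r s i = 0 := by
  simp [dipole, Finset.sum_sub_distrib]

end Dipole

section Laplacian

variable {N : ℕ} {w : Fin N → Fin N → ℝ}

theorem lapMat_mulVec_apply (hd : ∀ i, w i i = 0) (x : Fin N → ℝ) (i : Fin N) :
    (lapMat w *ᵥ x) i = ∑ j, w i j * (x i - x j) := by
  have hterm : ∀ j, lapMat w i j * x j
      = (if i = j then (∑ k, w i k) * x i else 0) - w i j * x j := by
    intro j
    by_cases h : i = j
    · subst h; simp [lapMat, hd i]
    · simp [lapMat, h]
  simp only [mulVec, dotProduct, hterm, Finset.sum_sub_distrib, Finset.sum_ite_eq,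
    Finset.mem_univ, if_true, mul_sub, Finset.sum_mul]

theorem two_mul_dotProduct_lapMat_mulVec (hsym : ∀ i j, w i j = w j i) (hd : ∀ i, w i i = 0)
    (x y : Fin N → ℝ) :
    2 * (x ⬝ᵥ lapMat w *ᵥ y) = ∑ i, ∑ j, w i j * ((x i - x j) * (y i - y j)) := by
  have hxy : x ⬝ᵥ lapMat w *ᵥ y = ∑ i, ∑ j, w i j * (x i * (y i - y j)) := by
    simp only [dotProduct, lapMat_mulVec_apply hd, Finset.mul_sum]
    exact Finset.sum_congr rfl fun i _ => Finset.sum_congr rfl fun j _ => by ring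
  have hswap : x ⬝ᵥ lapMat w *ᵥ y = ∑ i, ∑ j, w i j * (x j * (y j - y i)) := by
    rw [hxy, Finset.sum_comm]
    simp only [hsym]
  rw [two_mul]
  nth_rewrite 1 [hxy]
  rw [hswap, ← Finset.sum_add_distrib]
  refine Finset.sum_congr rfl fun i _ => ?_
  rw [← Finset.sum_add_distrib]
  exact Finset.sum_congr rfl fun j _ => by ring

theorem lapMat_transpose (hsym : ∀ i j, w i j = w j i) : (lapMat w)ᵀ = lapMat w := by
  ext i j
  by_cases h : i = j
  · simp [lapMat, h]
  · simp [lapMat, h, Ne.symm h, hsym i j]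

theorem lapMat_mulVec_eq_zero_of_forall_adj (hd : ∀ i, w i i = 0) {x : Fin N → ℝ}
    (hx : ∀ i j, (wGraph w).Adj i j → x i = x j) : lapMat w *ᵥ x = 0 := by
  ext i
  rw [lapMat_mulVec_apply hd, Pi.zero_apply]
  refine Finset.sum_eq_zero fun j _ => ?_
  by_cases hij : i = j
  · simp [hij]
  by_cases hw : w i j = 0
  · simp [hw]
  · simp [hx i j ⟨hij, Or.inl hw⟩]

end Laplacian

namespace IsWeight

variable {N : ℕ} {w : Fin N → Fin N → ℝ}

theorem adj_iff (hw : IsWeight w) {i j : Fin N} : (wGraph w).Adj i j ↔ i ≠ j ∧ w i j ≠ 0 := by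
  simp only [wGraph, hw.1 j i, or_self]

theorem dotProduct_lapMat_mulVec_self_eq_zero_iff (hw : IsWeight w) (x : Fin N → ℝ) :
    x ⬝ᵥ lapMat w *ᵥ x = 0 ↔ ∀ i j, (wGraph w).Adj i j → x i = x j := by
  obtain ⟨hsym, hnn, hd⟩ := hw
  refine ⟨fun hx i j hij => ?_, fun hx => by
    rw [lapMat_mulVec_eq_zero_of_forall_adj hd hx, dotProduct_zero]⟩
  have hterms : ∀ i j, 0 ≤ w i j * ((x i - x j) * (x i - x j)) :=
    fun i j => mul_nonneg (hnn i j) (mul_self_nonneg _)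
  have hsum : ∑ i, ∑ j, w i j * ((x i - x j) * (x i - x j)) = 0 := by
    rw [← two_mul_dotProduct_lapMat_mulVec hsym hd, hx, mul_zero]
  have hrow := (Finset.sum_eq_zero_iff_of_nonneg fun i _ => Finset.sum_nonneg fun j _ =>
    hterms i j).mp hsum i (Finset.mem_univ i)
  have hij_term := (Finset.sum_eq_zero_iff_of_nonneg fun j _ => hterms i j).mp hrow j
    (Finset.mem_univ j)
  have hwij : w i j ≠ 0 := ((adj_iff ⟨hsym, hnn, hd⟩).mp hij).2
  rwa [mul_eq_zero, or_iff_right hwij, mul_self_eq_zero, sub_eq_zero] at hij_term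

theorem eq_of_lapMat_mulVec_eq_zero (hw : IsWeight w) (hconn : (wGraph w).Connected)
    {u : Fin N → ℝ} (hu : lapMat w *ᵥ u = 0) (i j : Fin N) : u i = u j :=
  (hconn.preconnected i j).eq_of_forall_adj <|
    (hw.dotProduct_lapMat_mulVec_self_eq_zero_iff u).mp (by rw [hu, dotProduct_zero])

theorem lapMat_mulVec_mulVec_eq_of_sum_eq_zero (hw : IsWeight w) (hconn : (wGraph w).Connected)
    {Bd : Matrix (Fin N) (Fin N) ℝ} (hB : IsMoorePenrose (lapMat w) Bd) {v : Fin N → ℝ}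
    (hv : ∑ i, v i = 0) : lapMat w *ᵥ Bd *ᵥ v = v := by
  have hL : (lapMat w)ᵀ = lapMat w := lapMat_transpose hw.1
  have hLLBd : lapMat w * (lapMat w * Bd) = lapMat w := by
    simpa only [transpose_mul, hB.2.2.1, hL] using congrArg transpose hB.1
  have hsum_image : ∑ i, (lapMat w *ᵥ Bd *ᵥ v) i = 0 := by
    have h := two_mul_dotProduct_lapMat_mulVec hw.1 hw.2.2 1 (Bd *ᵥ v)
    simpa only [Pi.one_apply, sub_self, zero_mul, mul_zero, Finset.sum_const_zero,
      one_dotProduct, mul_eq_zero, two_ne_zero, false_or] using h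
  set u := v - lapMat w *ᵥ Bd *ᵥ v
  have hu : lapMat w *ᵥ u = 0 := by
    rw [mulVec_sub, mulVec_mulVec, mulVec_mulVec, Matrix.mul_assoc, hLLBd, sub_self]
  have hsum_u : ∑ i, u i = 0 := by
    simp only [u, Pi.sub_apply, Finset.sum_sub_distrib, hv, hsum_image, sub_self]
  have hu_zero : u = 0 := by
    ext i
    have hN : (N : ℝ) ≠ 0 := Nat.cast_ne_zero.mpr (Fin.pos i).ne'
    have hsum_const : ∑ j, u j = N * u i := by
      simp [hw.eq_of_lapMat_mulVec_eq_zero hconn hu _ i]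
    rwa [hsum_u, eq_comm, mul_eq_zero, or_iff_right hN] at hsum_const
  exact (sub_eq_zero.mp hu_zero).symm

end IsWeight

section DeleteEdge

variable {N : ℕ} (w : Fin N → Fin N → ℝ) (r s : Fin N)

def deleteEdgeWeight : Fin N → Fin N → ℝ :=
  fun i j => if s(i, j) = s(r, s) then 0 else w i j

theorem wGraph_deleteEdgeWeight :
    wGraph (deleteEdgeWeight w r s) = (wGraph w).deleteEdges {s(r, s)} := by
  ext i j
  have hswap : s(j, i) = s(i, j) := Sym2.eq_swap
  by_cases h : s(i, j) = s(r, s) <;>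
    simp only [wGraph, deleteEdgeWeight, SimpleGraph.deleteEdges_adj, Set.mem_singleton_iff,
      hswap, h] <;> simp

variable {w}

theorem IsWeight.deleteEdge (hw : IsWeight w) : IsWeight (deleteEdgeWeight w r s) := by
  obtain ⟨hsym, hnn, hd⟩ := hw
  refine ⟨fun i j => ?_, fun i j => ?_, fun i => ?_⟩ <;> simp only [deleteEdgeWeight]
  · rw [Sym2.eq_swap, hsym]
  · split_ifs <;> simp [hnn]
  · simp [hd]

theorem lapMat_mulVec_eq_deleteEdgeWeight_add (hsym : ∀ i j, w i j = w j i)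
    (hd : ∀ i, w i i = 0) (hrs : r ≠ s) (x : Fin N → ℝ) :
    lapMat w *ᵥ x = lapMat (deleteEdgeWeight w r s) *ᵥ x + (w r s * (x r - x s)) • dipole r s := by
  have hd' : ∀ i, deleteEdgeWeight w r s i i = 0 := fun i => by simp [deleteEdgeWeight, hd]
  ext i
  have hsplit : ∀ j, w i j
      = deleteEdgeWeight w r s i j + if s(i, j) = s(r, s) then w i j else 0 := by
    intro j
    unfold deleteEdgeWeight
    split_ifs <;> simp
  have hedge : ∑ j, (if s(i, j) = s(r, s) then w i j else 0) * (x i - x j)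
      = w r s * (x r - x s) * dipole r s i := by
    by_cases hir : i = r
    · subst hir; simp [dipole, hrs]
    by_cases his : i = s
    · subst his; simp [Sym2.eq_swap (a := r), dipole, hir, hsym i r]; ring
    · simp [hir, his, dipole]
  rw [lapMat_mulVec_apply hd, Pi.add_apply, lapMat_mulVec_apply hd', Pi.smul_apply, smul_eq_mul,
    ← hedge, ← Finset.sum_add_distrib]
  simp only [← add_mul, ← hsplit]

theorem IsWeight.mul_sub_ne_one_of_reachable_deleteEdges (hw : IsWeight w) (hrs : r ≠ s)
    {x : Fin N → ℝ} (hx : lapMat w *ᵥ x = dipole r s)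
    (hreach : ((wGraph w).deleteEdges {s(r, s)}).Reachable r s) : w r s * (x r - x s) ≠ 1 := by
  intro hone
  have henergy : x ⬝ᵥ lapMat w *ᵥ x
      = x ⬝ᵥ lapMat (deleteEdgeWeight w r s) *ᵥ x + w r s * (x r - x s) ^ 2 := by
    rw [lapMat_mulVec_eq_deleteEdgeWeight_add r s hw.1 hw.2.2 hrs, dotProduct_add,
      dotProduct_smul, dotProduct_comm x (dipole r s), dipole_dotProduct, smul_eq_mul]
    ring
  rw [hx, dotProduct_comm, dipole_dotProduct] at henergy
  have hzero : x ⬝ᵥ lapMat (deleteEdgeWeight w r s) *ᵥ x = 0 := by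
    linear_combination -henergy - (x r - x s) * hone
  have hadj := ((hw.deleteEdge r s).dotProduct_lapMat_mulVec_self_eq_zero_iff x).mp hzero
  rw [wGraph_deleteEdgeWeight] at hadj
  rw [hreach.eq_of_forall_adj hadj, sub_self, mul_zero] at hone
  exact zero_ne_one hone

theorem IsWeight.dipole_dotProduct_mulVec_dipole_of_not_reachable (hw : IsWeight w)
    (hrs : r ≠ s) (hwrs : w r s ≠ 0) {Bd : Matrix (Fin N) (Fin N) ℝ}
    (hBd : lapMat w * Bd * lapMat w = lapMat w)
    (hbridge : ¬((wGraph w).deleteEdges {s(r, s)}).Reachable r s) :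
    dipole r s ⬝ᵥ Bd *ᵥ dipole r s = (w r s)⁻¹ := by
  classical
  rw [← wGraph_deleteEdgeWeight] at hbridge
  set G' := wGraph (deleteEdgeWeight w r s)
  set χ : Fin N → ℝ := fun i => if G'.Reachable r i then 1 else 0
  have hχ_adj : ∀ i j, G'.Adj i j → χ i = χ j := by
    intro i j hij
    have hiff : G'.Reachable r i ↔ G'.Reachable r j :=
      ⟨fun h => h.trans hij.reachable, fun h => h.trans hij.symm.reachable⟩
    simp only [χ, hiff]
  have hχr : χ r = 1 := if_pos SimpleGraph.Reachable.rfl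
  have hχs : χ s = 0 := if_neg hbridge
  have hLχ : lapMat w *ᵥ ((w r s)⁻¹ • χ) = dipole r s := by
    rw [mulVec_smul, lapMat_mulVec_eq_deleteEdgeWeight_add r s hw.1 hw.2.2 hrs,
      lapMat_mulVec_eq_zero_of_forall_adj (hw.deleteEdge r s).2.2 hχ_adj, hχr, hχs,
      zero_add, sub_zero, mul_one, smul_smul, inv_mul_cancel₀ hwrs, one_smul]
  rw [dotProduct_mulVec_eq_of_mulVec_eq (lapMat_transpose hw.1) hBd hLχ, dipole_dotProduct]
  simp [hχr, hχs]

end DeleteEdge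

theorem locality_factor_eq_one_iff_bridge {N : ℕ} (w : Fin N → Fin N → ℝ)
    (hw : IsWeight w) (hconn : (wGraph w).Connected)
    (r s : Fin N) (hedge : 0 < w r s)
    (Bdag : Matrix (Fin N) (Fin N) ℝ)
    (hB : IsMoorePenrose (lapMat w) Bdag) :
    eta w Bdag r s = 1 ↔ (wGraph w).IsBridge s(r, s) := by
  have hrs : r ≠ s := fun h => hedge.ne' (h ▸ hw.2.2 r)
  rw [SimpleGraph.isBridge_iff, eta]
  constructor
  · intro hη hreach
    have hx := hw.lapMat_mulVec_mulVec_eq_of_sum_eq_zero hconn hB (sum_dipole r s)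
    rw [dipole_dotProduct] at hη
    exact hw.mul_sub_ne_one_of_reachable_deleteEdges r s hrs hx hreach hη
  · intro hbridge
    rw [hw.dipole_dotProduct_mulVec_dipole_of_not_reachable r s hrs hedge.ne' hB.1 hbridge,
      mul_inv_cancel₀ hedge.ne']
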